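/- arXiv:1406.6554 — 2 statements merged into one kernel-verified Lean document; each statement's English description precedes it below -/
import Mathlib

section
/- Let k ⊆ K be an algebraic extension of fields, let (B, m_B) be a discrete valuation ring whose field of fractions is K, and set A = B ∩ k and m_A = m_B ∩ k. Then A is a discrete valuation ring with maximal ideal m_A whose field of fractions is k. -/
/-!
The valuation `v` of the discrete valuation ring `B` restricts to a `ℤᵐ⁰`-valued valuation `w`
on `k` whose valuation subring is `A = B ∩ k`. The value group of `w` is a subgroup of the cyclic
group `ℤᵐ⁰ˣ`, hence cyclic, and it is nontrivial: otherwise `k ⊆ B`, and since `K` is algebraic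
over `k` and `B` is integrally closed this would force `B = K`. A valuation subring with cyclic
nontrivial value group is a discrete valuation ring. Finally `A → B` is a local homomorphism,
because the inverse of an element of `k` computed in `K` already lies in `k`.
-/

/-- The intersection `A = B ∩ k`, as a subring of `k`, where `k ⊆ K` is a field extension
(via `algebraMap k K`) and `B` is a subring of `K`. -/
def capSubring {k K : Type*} [Field k] [Field K] [Algebra k K] (B : Subring K) : Subring k :=
  B.comap (algebraMap k K)

/-- The natural ring homomorphism `A = B ∩ k → B` induced by the inclusion `k ⊆ K`. -/
def capHom {k K : Type*} [Field k] [Field K] [Algebra k K] (B : Subring K) :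
    capSubring (k := k) B →+* B :=
  (algebraMap k K).restrict (capSubring (k := k) B) B fun _ hx => hx

theorem RingHom.isLocalHom_restrict_comap {k K : Type*} [DivisionRing k] [DivisionRing K]
    (f : k →+* K) (B : Subring K) : IsLocalHom (f.restrict (B.comap f) B fun _ hx => hx) := by
  refine ⟨fun a ha => ?_⟩
  obtain ⟨c, hc⟩ := ha.exists_right_inv
  have hac : f a * c = 1 := congrArg Subtype.val hc
  have ha0 : (a : k) ≠ 0 := fun h => by simp [h] at hac
  have hinv : (a : k)⁻¹ ∈ B.comap f := by
    rw [Subring.mem_comap, map_inv₀, inv_eq_of_mul_eq_one_right hac]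
    exact c.2
  exact .of_mul_eq_one ⟨_, hinv⟩ (Subtype.ext (mul_inv_cancel₀ ha0))

theorem Subring.eq_top_of_range_algebraMap_le {R K : Type*} [CommRing R] [Field K] [Algebra R K]
    [Algebra.IsIntegral R K] (B : Subring K) [IsIntegrallyClosed B] [IsFractionRing B K]
    (h : (algebraMap R K).range ≤ B) : B = ⊤ := by
  refine eq_top_iff.mpr fun y _ => ?_
  have hy : IsIntegral B y :=
    (Algebra.IsIntegral.isIntegral (R := R) y).map_of_comp_eq
      ((algebraMap R K).codRestrict B fun x => h ⟨x, rfl⟩) (RingHom.id K) rfl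
  obtain ⟨b, rfl⟩ := IsIntegrallyClosed.isIntegral_iff.mp hy
  exact b.2

namespace IsDiscreteValuationRing

variable {k K : Type*} [Field k] [Field K] (B : Subring K) [IsDiscreteValuationRing B]
  [IsFractionRing B K]

theorem subring_eq_valuationSubring :
    B = ((maximalIdeal B).valuation K).valuationSubring.toSubring := by
  rw [← map_algebraMap_eq_valuationSubring]
  ext x
  simp only [Subring.mem_map, Subring.mem_top, true_and]
  exact ⟨fun hx => ⟨⟨x, hx⟩, rfl⟩, by rintro ⟨b, rfl⟩; exact b.2⟩

theorem subring_ne_top : B ≠ ⊤ := by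
  intro h
  apply not_isField B
  rw [← IsFractionRing.surjective_iff_isField (K := K)]
  exact fun y => ⟨⟨y, h ▸ Subring.mem_top y⟩, rfl⟩

variable [Algebra k K]

theorem capSubring_eq_valuationSubring_comap :
    capSubring (k := k) B =
      (((maximalIdeal B).valuation K).comap (algebraMap k K)).valuationSubring.toSubring := by
  ext x
  exact SetLike.ext_iff.mp (subring_eq_valuationSubring B) (algebraMap k K x)

theorem isNontrivial_valuation_comap [Algebra.IsAlgebraic k K] :
    (((maximalIdeal B).valuation K).comap (algebraMap k K)).IsNontrivial := by
  obtain ⟨x, hx⟩ : ∃ x : k, algebraMap k K x ∉ B := by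
    by_contra! h
    exact subring_ne_top B
      (Subring.eq_top_of_range_algebraMap_le B (by rintro _ ⟨x, rfl⟩; exact h x))
  rw [subring_eq_valuationSubring B] at hx
  have hx : 1 < (maximalIdeal B).valuation K (algebraMap k K x) := not_le.mp hx
  exact ⟨x, (zero_lt_one.trans hx).ne', hx.ne'⟩

end IsDiscreteValuationRing

/-- Let `k ⊆ K` be an algebraic extension of fields, let `(B, m_B)` be a discrete valuation
ring whose field of fractions is `K`, and set `A = B ∩ k` and `m_A = m_B ∩ k`. Then `A` is a
discrete valuation ring with maximal ideal `m_A` (i.e. the nonunits of `A` are exactly the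
elements mapping into `m_B`) whose field of fractions is `k`. -/
theorem stmt_0 {k K : Type*} [Field k] [Field K] [Algebra k K] [Algebra.IsAlgebraic k K]
    (B : Subring K) [IsDiscreteValuationRing B] [IsFractionRing B K] :
    IsDiscreteValuationRing (capSubring (k := k) B) ∧
    IsFractionRing (capSubring (k := k) B) k ∧
    ∀ a : capSubring (k := k) B,
      a ∈ nonunits (capSubring (k := k) B) ↔ capHom B a ∈ IsLocalRing.maximalIdeal B := by
  have := IsDiscreteValuationRing.isNontrivial_valuation_comap (k := k) B
  have hA := IsDiscreteValuationRing.capSubring_eq_valuationSubring_comap (k := k) B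
  refine ⟨hA ▸ inferInstanceAs (IsDiscreteValuationRing (Valuation.valuationSubring _)),
    hA ▸ inferInstanceAs (IsFractionRing (Valuation.valuationSubring _) k), fun a => ?_⟩
  have : IsLocalHom (capHom (k := k) B) := (algebraMap k K).isLocalHom_restrict_comap B
  rw [mem_nonunits_iff, IsLocalRing.mem_maximalIdeal, mem_nonunits_iff, not_iff_not]
  exact (isUnit_map_iff (capHom B) a).symm
end

section
/- Let k ⊆ K be an algebraic extension of fields, let (B, m_B) be a discrete valuation ring whose field of fractions is K, let ν : K → ℤ ∪ {∞} be the associated valuation, let b ∈ B, and let p = Tⁿ + r_{n−1} T^{n−1} + ⋯ + r_0 ∈ k[T] be a monic polynomial with p(b) = 0. Choose j ∈ {0, …, n−1} with ν(r_j) ≤ ν(r_i) for all i ∈ {0, …, n−1}. If ν(r_j) ≥ 0 then p has all coefficients in A = B ∩ k and the reduction of p modulo m_A = m_B ∩ k is a nonzero polynomial over A/m_A annihilating the class of b in B/m_B; if ν(r_j) < 0 then r_j^{-1} p has all coefficients in A and its reduction modulo m_A is a nonzero polynomial over A/m_A annihilating the class of b in B/m_B. -/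
open Polynomial

theorem Polynomial.map_ne_zero_of_coeff_eq_one {R S : Type*} [Semiring R] [Semiring S]
    [Nontrivial S] (f : R →+* S) {q : R[X]} {m : ℕ} (hm : q.coeff m = 1) : q.map f ≠ 0 :=
  fun h => by simpa [hm] using congrArg (coeff · m) h

theorem Polynomial.eval₂_quotientMap_map_mk {R S : Type*} [CommRing R] [CommRing S]
    (f : R →+* S) (I : Ideal S) (s : S) (q : R[X]) :
    eval₂ (Ideal.quotientMap I f le_rfl) (Ideal.Quotient.mk I s)
        (q.map (Ideal.Quotient.mk (I.comap f))) =
      Ideal.Quotient.mk I (eval₂ f s q) := by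
  rw [eval₂_map, Ideal.quotientMap_comp_mk le_rfl, hom_eval₂]

theorem Polynomial.Monic.min_le_addValuation_coeff {R Γ₀ : Type*} [Ring R]
    [LinearOrderedAddCommMonoidWithTop Γ₀] (w : AddValuation R Γ₀) {p : R[X]} (hp : p.Monic)
    {j : ℕ} (hj : ∀ i < p.natDegree, w (p.coeff j) ≤ w (p.coeff i)) (i : ℕ) :
    min (w (p.coeff j)) 0 ≤ w (p.coeff i) := by
  rcases lt_trichotomy i p.natDegree with h | rfl | h
  · exact (min_le_left _ _).trans (hj i h)
  · rw [hp.coeff_natDegree, w.map_one]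
    exact min_le_right _ _
  · rw [coeff_eq_zero_of_natDegree_lt h, w.map_zero]
    exact le_top

theorem AddValuation.nonneg_inv_mul {F Γ₀ : Type*} [Field F]
    [LinearOrderedAddCommGroupWithTop Γ₀] (w : AddValuation F Γ₀) {x y : F} (hx : w x ≠ ⊤)
    (hxy : w x ≤ w y) : 0 ≤ w (x⁻¹ * y) := by
  rw [mul_comm, ← div_eq_mul_inv, w.map_div]
  exact LinearOrderedAddCommGroupWithTop.sub_self_nonneg.trans
    ((LinearOrderedAddCommGroupWithTop.sub_le_sub_iff_left_of_ne_top hx).2 hxy)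

section capSubring

variable {k K : Type*} [Field k] [Field K] [Algebra k K] (B : Subring K)

theorem coe_eval₂_capHom (q : (capSubring (k := k) B)[X]) (b : B) :
    ((eval₂ (capHom B) b q : B) : K) =
      eval₂ (algebraMap k K) (b : K) (q.map (capSubring B).subtype) := by
  rw [eval₂_map, ← Subring.coe_subtype, hom_eval₂]
  rfl

theorem exists_lift_reduction_eval₂_eq_zero [IsLocalRing B] (q : k[X])
    (hq : ∀ i, algebraMap k K (q.coeff i) ∈ B) {m : ℕ} (hm : q.coeff m = 1) (b : B)
    (hqb : eval₂ (algebraMap k K) (b : K) q = 0) :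
    ∃ qA : (capSubring (k := k) B)[X],
      qA.map (capSubring (k := k) B).subtype = q ∧
      qA.map (Ideal.Quotient.mk
        ((IsLocalRing.maximalIdeal B).comap (capHom (k := k) B))) ≠ 0 ∧
      eval₂ (Ideal.quotientMap (IsLocalRing.maximalIdeal B) (capHom (k := k) B) le_rfl)
        (Ideal.Quotient.mk (IsLocalRing.maximalIdeal B) b)
        (qA.map (Ideal.Quotient.mk
          ((IsLocalRing.maximalIdeal B).comap (capHom (k := k) B)))) = 0 := by
  have hsub : (q.coeffs : Set k) ⊆ capSubring (k := k) B := fun a ha => by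
    obtain ⟨n, -, rfl⟩ := mem_coeffs_iff.1 ha
    exact hq n
  set qA := q.toSubring _ hsub
  have hqA : qA.map (capSubring (k := k) B).subtype = q := q.map_toSubring _ hsub
  have hqA_m : qA.coeff m = 1 := Subtype.ext (by rw [coeff_toSubring' _ _ hsub, hm]; rfl)
  have hqA_b : eval₂ (capHom B) b qA = 0 := Subtype.ext (by rw [coe_eval₂_capHom, hqA, hqb]; rfl)
  refine ⟨qA, hqA, map_ne_zero_of_coeff_eq_one _ hqA_m, ?_⟩
  rw [eval₂_quotientMap_map_mk, hqA_b, map_zero]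

end capSubring

theorem stmt_4_general {k K : Type*} [Field k] [Field K] [Algebra k K]
    (B : Subring K) [IsDiscreteValuationRing B]
    (v : AddValuation K (WithTop ℤ)) (hvB : ∀ x : K, 0 ≤ v x ↔ x ∈ B)
    (b : B) (p : Polynomial k) (hmonic : p.Monic)
    (hpb : Polynomial.eval₂ (algebraMap k K) (b : K) p = 0)
    (j : ℕ)
    (hjmin : ∀ i < p.natDegree,
      v (algebraMap k K (p.coeff j)) ≤ v (algebraMap k K (p.coeff i))) :
    (0 ≤ v (algebraMap k K (p.coeff j)) →
      ∃ pA : Polynomial (capSubring (k := k) B),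
        pA.map (capSubring (k := k) B).subtype = p ∧
        pA.map (Ideal.Quotient.mk
          ((IsLocalRing.maximalIdeal B).comap (capHom (k := k) B))) ≠ 0 ∧
        Polynomial.eval₂
          (Ideal.quotientMap (IsLocalRing.maximalIdeal B) (capHom (k := k) B) le_rfl)
          (Ideal.Quotient.mk (IsLocalRing.maximalIdeal B) b)
          (pA.map (Ideal.Quotient.mk
            ((IsLocalRing.maximalIdeal B).comap (capHom (k := k) B)))) = 0) ∧
    (v (algebraMap k K (p.coeff j)) < 0 →
      ∃ pA : Polynomial (capSubring (k := k) B),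
        pA.map (capSubring (k := k) B).subtype = Polynomial.C (p.coeff j)⁻¹ * p ∧
        pA.map (Ideal.Quotient.mk
          ((IsLocalRing.maximalIdeal B).comap (capHom (k := k) B))) ≠ 0 ∧
        Polynomial.eval₂
          (Ideal.quotientMap (IsLocalRing.maximalIdeal B) (capHom (k := k) B) le_rfl)
          (Ideal.Quotient.mk (IsLocalRing.maximalIdeal B) b)
          (pA.map (Ideal.Quotient.mk
            ((IsLocalRing.maximalIdeal B).comap (capHom (k := k) B)))) = 0) := by
  set w := v.comap (algebraMap k K)
  have hmin := hmonic.min_le_addValuation_coeff w hjmin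
  refine ⟨fun hv_nonneg => ?_, fun hv_neg => ?_⟩
  · refine exists_lift_reduction_eval₂_eq_zero B p (fun i => ?_) hmonic.coeff_natDegree b hpb
    exact (hvB _).1 (min_eq_right hv_nonneg ▸ hmin i)
  · have hrj : w (p.coeff j) ≠ ⊤ := ne_top_of_lt hv_neg
    refine exists_lift_reduction_eval₂_eq_zero B (C (p.coeff j)⁻¹ * p) (fun i => ?_) (m := j)
      ?_ b ?_
    · rw [coeff_C_mul, ← hvB]
      exact w.nonneg_inv_mul hrj (min_eq_left hv_neg.le ▸ hmin i)
    · rw [coeff_C_mul, inv_mul_cancel₀ ((w.ne_top_iff).1 hrj)]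
    · rw [eval₂_mul, hpb, mul_zero]

/-- Let `k ⊆ K` be an algebraic extension of fields, let `(B, m_B)` be a discrete valuation
ring whose field of fractions is `K`, and let `ν : K → ℤ ∪ {∞}` be the associated valuation
(so that `ν(x) ≥ 0 ↔ x ∈ B`). Let `b ∈ B` and let `p = Tⁿ + r_{n-1} T^{n-1} + ⋯ + r_0 ∈ k[T]`
be a monic polynomial with `p(b) = 0`. Choose `j ∈ {0, …, n-1}` with `ν(r_j) ≤ ν(r_i)` for all
`i ∈ {0, …, n-1}`. If `ν(r_j) ≥ 0` then `p` has all coefficients in `A = B ∩ k` and the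
reduction of `p` modulo `m_A = m_B ∩ k` is a nonzero polynomial over `A/m_A` annihilating the
class of `b` in `B/m_B`; if `ν(r_j) < 0` then `r_j⁻¹·p` has all coefficients in `A` and its
reduction modulo `m_A` is a nonzero polynomial over `A/m_A` annihilating the class of `b` in
`B/m_B`. -/
theorem stmt_4 {k K : Type*} [Field k] [Field K] [Algebra k K] [Algebra.IsAlgebraic k K]
    (B : Subring K) [IsDiscreteValuationRing B] [IsFractionRing B K]
    (v : AddValuation K (WithTop ℤ)) (hvB : ∀ x : K, 0 ≤ v x ↔ x ∈ B)
    (b : B) (p : Polynomial k) (hmonic : p.Monic)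
    (hpb : Polynomial.eval₂ (algebraMap k K) (b : K) p = 0)
    (j : ℕ) (hj : j < p.natDegree)
    (hjmin : ∀ i < p.natDegree,
      v (algebraMap k K (p.coeff j)) ≤ v (algebraMap k K (p.coeff i))) :
    (0 ≤ v (algebraMap k K (p.coeff j)) →
      ∃ pA : Polynomial (capSubring (k := k) B),
        pA.map (capSubring (k := k) B).subtype = p ∧
        pA.map (Ideal.Quotient.mk
          ((IsLocalRing.maximalIdeal B).comap (capHom (k := k) B))) ≠ 0 ∧
        Polynomial.eval₂
          (Ideal.quotientMap (IsLocalRing.maximalIdeal B) (capHom (k := k) B) le_rfl)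
          (Ideal.Quotient.mk (IsLocalRing.maximalIdeal B) b)
          (pA.map (Ideal.Quotient.mk
            ((IsLocalRing.maximalIdeal B).comap (capHom (k := k) B)))) = 0) ∧
    (v (algebraMap k K (p.coeff j)) < 0 →
      ∃ pA : Polynomial (capSubring (k := k) B),
        pA.map (capSubring (k := k) B).subtype = Polynomial.C (p.coeff j)⁻¹ * p ∧
        pA.map (Ideal.Quotient.mk
          ((IsLocalRing.maximalIdeal B).comap (capHom (k := k) B))) ≠ 0 ∧
        Polynomial.eval₂
          (Ideal.quotientMap (IsLocalRing.maximalIdeal B) (capHom (k := k) B) le_rfl)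
          (Ideal.Quotient.mk (IsLocalRing.maximalIdeal B) b)
          (pA.map (Ideal.Quotient.mk
            ((IsLocalRing.maximalIdeal B).comap (capHom (k := k) B)))) = 0) :=
  stmt_4_general B v hvB b p hmonic hpb j hjmin
end
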